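/- arXiv:1602.05423 — 2 statements merged into one kernel-verified Lean document; each statement's English description precedes it below -/
import Mathlib

section
/- Let η be a symmetric nondegenerate N×N complex matrix and f ∈ ℂ[[v^1,…,v^N]] a formal power series; let c_{αβγ} := ∂³f/∂v^α∂v^β∂v^γ and c_{αβγμ} := ∂⁴f/∂v^α∂v^β∂v^γ∂v^μ, and raise indices with η: c^{αμ}_μ := η^{αρ}η^{μσ}c_{ρσμ}, c^{μαβ}_μ := η^{μν}η^{αρ}η^{βσ}c_{μνρσ}. Consider the matrix of differential operators K_ṽ^{αβ} = η^{αβ}∂_x + (ε²/24)(c^{μαβ}_μ ∂_x³ + ∂_x³∘c^{μαβ}_μ − (∂_x² c^{μαβ}_μ)∂_x − ∂_x∘(∂_x² c^{μαβ}_μ)), where c-tensors are regarded as degree-0 differential polynomials in the variables ṽ and ∂_x acts as the total x-derivative. Then the Miura transformation ṽ^α ↦ u^α(ṽ) = ṽ^α − (ε²/24)∂_x² c^{αμ}_μ transforms K_ṽ into η∂_x modulo ε⁴: Σ_{p,q≥0} (∂u^α(ṽ)/∂ṽ^μ_p) ∂_x^p ∘ K_ṽ^{μν} ∘ (−∂_x)^q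 ∘ (∂u^β(ṽ)/∂ṽ^ν_q) = η^{αβ}∂_x + O(ε⁴), i.e. the ε⁰- and ε²-parts of the transformed operator are η^{αβ}∂_x and 0 respectively. -/
/-!
Common formal framework for the theory of differential polynomials, local
functionals and tau-structures, following Buryak–Dubrovin–Guéré–Rossi.

Variables of the algebra of differential polynomials: `Sum.inl (α, i)` stands
for `u^α_i` (with `u^α = u^α_0`) and `Sum.inr ()` stands for `ε`.  The paper's
index `1` (the unit direction) corresponds to `(0 : Fin N)` here.
-/

/-- The variables of the algebra of differential polynomials. -/
abbrev DVar (N : ℕ) : Type := (Fin N × ℕ) ⊕ Unit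

/-- The ring `Â_N` of (extended) differential polynomials, realized inside the
ring of formal power series in the variables `u^α_i` and `ε`. -/
abbrev DP (N : ℕ) : Type := MvPowerSeries (DVar N) ℂ

namespace DP

variable {N : ℕ}

/-- Coefficient of a monomial. -/
noncomputable def co (f : DP N) (m : DVar N →₀ ℕ) : ℂ :=
  MvPowerSeries.coeff (R := ℂ) m f

/-- Build a power series from its coefficients. -/
def ofCo (F : (DVar N →₀ ℕ) → ℂ) : DP N := F

/-- The variable `u^α_i`. -/
noncomputable def uv (α : Fin N) (i : ℕ) : DP N :=
  MvPowerSeries.X (Sum.inl (α, i))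

/-- The variable `ε`. -/
noncomputable def eps : DP N := MvPowerSeries.X (Sum.inr ())

/-- The partial derivative `∂/∂v` with respect to one of the variables. -/
noncomputable def pd (v : DVar N) (f : DP N) : DP N :=
  ofCo fun m => ((m v : ℂ) + 1) * co f (m + Finsupp.single v 1)

/-- The spatial derivative `∂_x = Σ_{α,i} u^α_{i+1} ∂/∂u^α_i`. -/
noncomputable def dx (f : DP N) : DP N :=
  ofCo fun m =>
    ∑ v ∈ m.support,
      (match v with
        | Sum.inl (α, i + 1) =>
            co (pd (Sum.inl (α, i)) f) (m - Finsupp.single (Sum.inl (α, i + 1)) 1)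
        | _ => (0 : ℂ))

/-- The variational derivative `δ/δu^μ = Σ_{i≥0} (−∂_x)^i ∘ ∂/∂u^μ_i`. -/
noncomputable def vd (μ : Fin N) (f : DP N) : DP N :=
  ofCo fun m => ∑ᶠ i : ℕ, ((-1 : ℂ) ^ i) * co (dx^[i] (pd (Sum.inl (μ, i)) f)) m

/-- The weighted degree of a monomial: `deg u^α_i = i`, `deg ε = −1`. -/
noncomputable def wdeg (m : DVar N →₀ ℕ) : ℤ :=
  ∑ v ∈ m.support,
    (match v with
      | Sum.inl (_, i) => (i : ℤ)
      | Sum.inr _ => (-1 : ℤ)) * (m v : ℤ)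

/-- Degree-`k` homogeneity (membership in `Â_N^{[k]}`). -/
def IsHomog (k : ℤ) (f : DP N) : Prop :=
  ∀ m, co f m ≠ 0 → wdeg m = k

/-- Being a constant, i.e. an element of `ℂ[[ε]]`. -/
def IsConst (f : DP N) : Prop :=
  ∀ m, co f m ≠ 0 → ∀ v ∈ m.support, v = Sum.inr ()

/-- Vanishing of the evaluation at `u^*_* = 0`. -/
def VanishAtU0 (f : DP N) : Prop :=
  ∀ k : ℕ, co f (Finsupp.single (Sum.inr ()) k) = 0

/-- Being a genuine differential polynomial: in each ε-degree at most `e`,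
polynomiality (bounded degree, boundedly many variables) in the jet
variables `u^α_i`, `i ≥ 1`. -/
def IsDiffPoly (f : DP N) : Prop :=
  ∀ e : ℕ, ∃ D : ℕ, ∀ m, co f m ≠ 0 → m (Sum.inr ()) ≤ e →
    ((∑ v ∈ m.support,
        (match v with
          | Sum.inl (_, _ + 1) => m v
          | _ => 0)) ≤ D) ∧
      ∀ (α : Fin N) (i : ℕ), D < i → m (Sum.inl (α, i)) = 0

/-- The submodule of constants `ℂ[[ε]] ⊆ Â_N`. -/
noncomputable def constSub (N : ℕ) : Submodule ℂ (DP N) where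
  carrier := {f | IsConst f}
  add_mem' := by
    intro f g hf hg m hm
    have hco : co (f + g) m = co f m + co g m := map_add _ _ _
    by_cases h1 : co f m = 0
    · have h2 : co g m ≠ 0 := by
        intro h2; exact hm (by rw [hco, h1, h2, add_zero])
      exact hg m h2
    · exact hf m h1
  zero_mem' := by
    intro m hm
    exact (hm (map_zero (MvPowerSeries.coeff (R := ℂ) m))).elim
  smul_mem' := by
    intro c f hf m hm
    have hne : co f m ≠ 0 := by
      intro h
      apply hm
      have hsm : co (c • f) m = c * co f m := by
        simp [co]
      rw [hsm, h, mul_zero]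
    exact hf m hne

/-- The submodule `ℂ[[ε]] + ∂_x(Â_N)` by which one quotients to get local
functionals. -/
noncomputable def lfSub (N : ℕ) : Submodule ℂ (DP N) :=
  constSub N ⊔ Submodule.span ℂ (Set.range (dx : DP N → DP N))

/-- The space `Λ̂_N` of local functionals. -/
abbrev LF (N : ℕ) := DP N ⧸ lfSub N

/-- The projection `f ↦ ∫ f dx`. -/
noncomputable def intg : DP N →ₗ[ℂ] LF N := (lfSub N).mkQ

/-- A choice of density for a local functional. -/
noncomputable def rep (h : LF N) : DP N :=
  (Submodule.Quotient.mk_surjective (lfSub N) h).choose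

/-- The variational derivative `δ/δu^μ` of a local functional. -/
noncomputable def vdQ (μ : Fin N) (h : LF N) : DP N := vd μ (rep h)

/-- The partial derivative `∂/∂v` of a local functional. -/
noncomputable def pdQ (v : DVar N) (h : LF N) : LF N := intg (pd v (rep h))

/-- The degree-`k` local functionals `Λ̂_N^{[k]}`. -/
noncomputable def LFHomog (N : ℕ) (k : ℤ) : Set (LF N) :=
  intg '' {f : DP N | IsHomog k f ∧ IsDiffPoly f}

/-- The operator `K = η ∂_x` applied to a tuple of differential polynomials. -/
noncomputable def etaAp (η : Matrix (Fin N) (Fin N) ℂ) (α : Fin N)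
    (g : Fin N → DP N) : DP N :=
  ∑ ν : Fin N, η α ν • dx (g ν)

/-- The bracket `{f̄, ḡ}_{η∂_x}` of local functionals. -/
noncomputable def lfbEta (η : Matrix (Fin N) (Fin N) ℂ) (f g : LF N) : LF N :=
  intg (∑ μ : Fin N, vdQ μ f * etaAp η μ fun ν => vdQ ν g)

/-- The bracket `{f, h̄}_{η∂_x}` of a differential polynomial with a local
functional. -/
noncomputable def pbEta (η : Matrix (Fin N) (Fin N) ℂ) (f : DP N) (h : LF N) : DP N :=
  ofCo fun m => ∑ γ : Fin N, ∑ᶠ n : ℕ,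
    co (pd (Sum.inl (γ, n)) f * dx^[n] (etaAp η γ fun μ => vdQ μ h)) m

/-- A general operator `K^{γν} = Σ_j K^{γν}_j ∂_x^j` applied to a tuple of
differential polynomials. -/
noncomputable def Kap (K : Fin N → Fin N → ℕ → DP N) (γ : Fin N)
    (g : Fin N → DP N) : DP N :=
  ∑ ν : Fin N, ofCo fun m => ∑ᶠ j : ℕ, co (K γ ν j * dx^[j] (g ν)) m

/-- The bracket `{f̄, ḡ}_K` of local functionals. -/
noncomputable def lfbK (K : Fin N → Fin N → ℕ → DP N) (f g : LF N) : LF N :=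
  intg (∑ μ : Fin N, vdQ μ f * Kap K μ fun ν => vdQ ν g)

/-- The bracket `{f, h̄}_K` of a differential polynomial with a local
functional. -/
noncomputable def pbK (K : Fin N → Fin N → ℕ → DP N) (f : DP N) (h : LF N) : DP N :=
  ofCo fun m => ∑ γ : Fin N, ∑ᶠ n : ℕ,
    co (pd (Sum.inl (γ, n)) f * dx^[n] (Kap K γ fun μ => vdQ μ h)) m

/-- Being a hamiltonian operator. -/
structure IsHamOp (K : Fin N → Fin N → ℕ → DP N) : Prop where
  finite : ∀ γ ν, ∃ J : ℕ, ∀ j, J ≤ j → K γ ν j = 0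
  deg : ∀ (γ ν : Fin N) (j : ℕ), IsHomog (1 - (j : ℤ)) (K γ ν j)
  poly : ∀ γ ν j, IsDiffPoly (K γ ν j)
  antisym : ∀ f g : LF N, lfbK K f g = -lfbK K g f
  jacobi : ∀ f g h : LF N,
    lfbK K (lfbK K f g) h + lfbK K (lfbK K g h) f + lfbK K (lfbK K h f) g = 0

/-- A hamiltonian hierarchy: a hamiltonian operator together with pairwise
commuting Hamiltonians `h̄_{β,q} ∈ Λ̂^{[0]}_N` such that `h̄_{1,0}` generates the
spatial translations. -/
structure IsHierarchy [NeZero N] (K : Fin N → Fin N → ℕ → DP N)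
    (H : Fin N → ℕ → LF N) : Prop where
  ham : IsHamOp K
  mem : ∀ β q, H β q ∈ LFHomog N 0
  comm : ∀ β q γ p, lfbK K (H β q) (H γ p) = 0
  transl : ∀ α, Kap K α (fun μ => vdQ μ (H 0 0)) = uv α 1

/-- A tau-structure for a hamiltonian hierarchy.  Here `h β q` denotes the
tau-symmetric density `h_{β,q-1}` (an index shift by one). -/
structure IsTauStructure [NeZero N] (K : Fin N → Fin N → ℕ → DP N)
    (H : Fin N → ℕ → LF N) (h : Fin N → ℕ → DP N) : Prop where
  mem : ∀ β q, IsHomog 0 (h β q) ∧ IsDiffPoly (h β q)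
  casimir : ∀ β α, Kap K α (fun μ => vdQ μ (intg (h β 0))) = 0
  indep : LinearIndependent ℂ fun β : Fin N => intg (h β 0)
  nondeg : Matrix.det (Matrix.of fun α β : Fin N => co (K α β 1) 0) ≠ 0
  dens : ∀ β q, intg (h β (q + 1)) = H β q
  tausym : ∀ α β p q, pbK K (h α p) (H β q) = pbK K (h β q) (H α p)

end DP



namespace DP

variable {N : ℕ}

/-- A formal power series in the variables `v^1, …, v^N` only (no jet
variables `v^α_i`, `i ≥ 1`, and no `ε`). -/
def OnlyV (f : DP N) : Prop :=
  ∀ m, co f m ≠ 0 → ∀ v ∈ m.support, ∃ α : Fin N, v = Sum.inl (α, 0)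

/-- Third derivative `c_{abc} = ∂³f/∂v^a∂v^b∂v^c`. -/
noncomputable def d3 (f : DP N) (a b c : Fin N) : DP N :=
  pd (Sum.inl (a, 0)) (pd (Sum.inl (b, 0)) (pd (Sum.inl (c, 0)) f))

/-- Fourth derivative `c_{abcd} = ∂⁴f/∂v^a∂v^b∂v^c∂v^d`. -/
noncomputable def d4 (f : DP N) (a b c d : Fin N) : DP N :=
  pd (Sum.inl (a, 0)) (d3 f b c d)

/-- `c^{αμ}_μ = η^{αρ}η^{μσ}c_{ρσμ}`. -/
noncomputable def cA (η : Matrix (Fin N) (Fin N) ℂ) (f : DP N) (α : Fin N) : DP N :=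
  ∑ ρ : Fin N, ∑ σ : Fin N, ∑ μ : Fin N, (η α ρ * η μ σ) • d3 f ρ σ μ

/-- `c^{μαβ}_μ = η^{μν}η^{αρ}η^{βσ}c_{μνρσ}`. -/
noncomputable def cB (η : Matrix (Fin N) (Fin N) ℂ) (f : DP N) (α β : Fin N) : DP N :=
  ∑ μ : Fin N, ∑ ν : Fin N, ∑ ρ : Fin N, ∑ σ : Fin N,
    (η μ ν * η α ρ * η β σ) • d4 f μ ν ρ σ

/-- The genus-one Dubrovin–Zhang operator
`K_ṽ^{αβ} = η^{αβ}∂_x + (ε²/24)(c^{μαβ}_μ ∂_x³ + ∂_x³∘c^{μαβ}_μ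
− (∂_x²c^{μαβ}_μ)∂_x − ∂_x∘(∂_x²c^{μαβ}_μ))`, acting on a differential
polynomial. -/
noncomputable def Kv (η : Matrix (Fin N) (Fin N) ℂ) (f : DP N) (α β : Fin N)
    (g : DP N) : DP N :=
  η α β • dx g + (24 : ℂ)⁻¹ • (eps ^ 2 *
    (cB η f α β * dx^[3] g + dx^[3] (cB η f α β * g)
      - dx^[2] (cB η f α β) * dx g - dx (dx^[2] (cB η f α β) * g)))

/-- The Miura transformation `ṽ^α ↦ u^α(ṽ) = ṽ^α − (ε²/24)∂_x²c^{αμ}_μ`. -/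
noncomputable def Uc (η : Matrix (Fin N) (Fin N) ℂ) (f : DP N) (α : Fin N) : DP N :=
  uv α 0 - (24 : ℂ)⁻¹ • (eps ^ 2 * dx^[2] (cA η f α))

/-- The transformed operator
`Σ_{p,q} (∂u^α/∂ṽ^μ_p) ∂_x^p ∘ K_ṽ^{μν} ∘ (−∂_x)^q ∘ (∂u^β/∂ṽ^ν_q)`. -/
noncomputable def KvT (η : Matrix (Fin N) (Fin N) ℂ) (f : DP N) (α β : Fin N)
    (g : DP N) : DP N :=
  ofCo fun m => ∑ᶠ p : ℕ, ∑ᶠ q : ℕ,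
    co (∑ μ : Fin N, ∑ ν : Fin N,
      pd (Sum.inl (μ, p)) (Uc η f α) *
        dx^[p] (Kv η f μ ν
          (((-1 : ℂ) ^ q) • dx^[q] (pd (Sum.inl (ν, q)) (Uc η f β) * g)))) m

end DP

/-!
Write the Jacobian of the Miura map as `∂u^α/∂ṽ^μ_p = δ^α_μ δ_{p0} − (ε²/24) B^α_{μ,p}`. Since
`c^{αν}_ν` depends on the `ṽ^μ` alone, `B^α_{μ,p} = C(2,p) ∂_x^{2−p} ∂_μ c^{αν}_ν`; in particular
it vanishes for `p ≥ 3`, so the transformed operator is a finite sum. Writing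
`K_ṽ = η∂_x + (ε²/24) K₁`, it is congruent modulo `ε⁴` to
`η∂_x + (ε²/24)(K₁ − B ∘ η∂_x − η∂_x ∘ B*)`. The full symmetry of `c_{μνρσ}` gives
`η^{αν} ∂_ν c^{βμ}_μ = c^{μαβ}_μ = η^{νβ} ∂_ν c^{αμ}_μ`, and then the `ε²`-term vanishes by the
Leibniz rule. An `ε`-order is expressed as divisibility by a power of `ε`, which is compatible
with `∂_x` since `∂_x` is a derivation killing `ε`.
-/

namespace DP

variable {N : ℕ}

open MvPowerSeries

lemma co_eq_coeff (f : DP N) (m : DVar N →₀ ℕ) : co f m = coeff m f := rfl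

lemma coeff_pd (v : DVar N) (f : DP N) (m : DVar N →₀ ℕ) :
    coeff m (pd v f) = ((m v : ℂ) + 1) * coeff (m + Finsupp.single v 1) f := rfl

lemma pd_eq_pderiv (v : DVar N) (f : DP N) : pd v f = pderiv ℂ v f := by
  ext m
  rw [coeff_pd, coeff_pderiv, mul_comm]

lemma pd_mul (v : DVar N) (f g : DP N) : pd v (f * g) = pd v f * g + f * pd v g := by
  simp only [pd_eq_pderiv, Derivation.leibniz, smul_eq_mul]
  ring

lemma pd_sub (v : DVar N) (f g : DP N) : pd v (f - g) = pd v f - pd v g := by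
  simp only [pd_eq_pderiv, map_sub]

lemma pd_smul (v : DVar N) (c : ℂ) (f : DP N) : pd v (c • f) = c • pd v f := by
  simp only [pd_eq_pderiv, Derivation.map_smul]

lemma pd_sum {ι : Type*} (v : DVar N) (s : Finset ι) (f : ι → DP N) :
    pd v (∑ i ∈ s, f i) = ∑ i ∈ s, pd v (f i) := by
  simp only [pd_eq_pderiv, map_sum]

lemma pd_X (v w : DVar N) : pd v (X w : DP N) = if w = v then 1 else 0 := by
  split_ifs with h
  · rw [h, pd_eq_pderiv, pderiv_X_self]
  · rw [pd_eq_pderiv, pderiv_X_of_ne h]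

lemma pd_comm (v w : DVar N) (f : DP N) : pd v (pd w f) = pd w (pd v f) := by
  ext m
  simp only [coeff_pd, Finsupp.add_apply, add_right_comm m]
  by_cases h : v = w
  · subst h; rfl
  · simp only [Finsupp.single_eq_of_ne h, Finsupp.single_eq_of_ne' h, add_zero]
    ring

lemma coeff_X_mul_eq (v : DVar N) (h : DP N) (m : DVar N →₀ ℕ) :
    coeff m (X v * h) = if Finsupp.single v 1 ≤ m then coeff (m - Finsupp.single v 1) h else 0 := by
  rw [X_def, coeff_monomial_mul, one_mul]

lemma coeff_X_mul_of_eq_zero {v : DVar N} {m : DVar N →₀ ℕ} (hv : m v = 0) (h : DP N) :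
    coeff m (X v * h) = 0 := by
  simp [coeff_X_mul_eq, Finsupp.single_le_iff, hv]

/-- `∂/∂u^α_i` attached to `u^α_{i+1}` (and `0` to `u^α_0` and `ε`), so that
`∂_x = Σ_v v · lowerPd v`. -/
noncomputable def lowerPd : DVar N → Derivation ℂ (DP N) (DP N)
  | Sum.inl (α, i + 1) => pderiv ℂ (Sum.inl (α, i))
  | _ => 0

noncomputable def dxOn (T : Finset (DVar N)) : Derivation ℂ (DP N) (DP N) :=
  ∑ v ∈ T, (X v : DP N) • lowerPd v

lemma dxOn_apply (T : Finset (DVar N)) (f : DP N) : dxOn T f = ∑ v ∈ T, X v * lowerPd v f := by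
  rw [dxOn, ← Derivation.coeFnAddMonoidHom_apply, map_sum, Finset.sum_apply]
  rfl

lemma coeff_dx_eq_dxOn {T : Finset (DVar N)} {m : DVar N →₀ ℕ} (hT : m.support ⊆ T)
    (f : DP N) : coeff m (dx f) = coeff m (dxOn T f) := by
  rw [dxOn_apply, map_sum, ← Finset.sum_subset hT fun v _ hv =>
    coeff_X_mul_of_eq_zero (Finsupp.notMem_support_iff.mp hv) _]
  refine Finset.sum_congr rfl fun v hv => ?_
  rw [Finsupp.mem_support_iff] at hv
  rcases v with ⟨α, _ | i⟩ | _ <;>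
    simp [lowerPd, coeff_X_mul_eq, Finsupp.single_le_iff, Nat.one_le_iff_ne_zero.mpr hv,
      co_eq_coeff, pd_eq_pderiv]

lemma coeff_dx_of_le {p m : DVar N →₀ ℕ} (h : p ≤ m) (f : DP N) :
    coeff p (dx f) = coeff p (dxOn m.support f) :=
  coeff_dx_eq_dxOn (Finsupp.support_mono h) f

/-- `∂_x` agrees, in each coefficient, with a finite sum of derivations, hence is one. -/
noncomputable def dxDer : Derivation ℂ (DP N) (DP N) where
  toFun := dx
  map_add' f g := by
    ext m
    simp only [map_add, coeff_dx_of_le le_rfl]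
  map_smul' c f := by
    ext m
    simp only [Derivation.map_smul, coeff_dx_of_le le_rfl, RingHom.id_apply, map_smul]
  map_one_eq_zero' := by
    ext m
    simp only [LinearMap.coe_mk, AddHom.coe_mk, coeff_dx_of_le le_rfl, Derivation.map_one_eq_zero]
  leibniz' f g := by
    ext m
    show coeff m (dx (f * g)) = coeff m (f * dx g + g * dx f)
    rw [coeff_dx_of_le le_rfl, Derivation.leibniz, smul_eq_mul, smul_eq_mul, map_add, map_add,
      coeff_mul, coeff_mul, coeff_mul, coeff_mul]
    congr 1 <;> refine Finset.sum_congr rfl fun p hp => ?_ <;>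
      rw [coeff_dx_of_le (le_add_self.trans_eq (Finset.HasAntidiagonal.mem_antidiagonal.mp hp))]

lemma lowerPd_inl_zero (α : Fin N) (h : DP N) : lowerPd (Sum.inl (α, 0)) h = 0 := rfl

lemma lowerPd_inl_succ (α : Fin N) (i : ℕ) (h : DP N) :
    lowerPd (Sum.inl (α, i + 1)) h = pd (Sum.inl (α, i)) h :=
  (pd_eq_pderiv _ _).symm

lemma pd_lowerPd (u v : DVar N) (h : DP N) : pd u (lowerPd v h) = lowerPd v (pd u h) := by
  rcases v with ⟨α, _ | i⟩ | _ <;> simp only [lowerPd, Derivation.zero_apply, pd_eq_pderiv]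
  · simp
  · rw [← pd_eq_pderiv, ← pd_eq_pderiv, ← pd_eq_pderiv, ← pd_eq_pderiv, pd_comm]
  · simp

lemma pd_dxOn (u : DVar N) (T : Finset (DVar N)) (h : DP N) :
    pd u (dxOn T h) = dxOn T (pd u h) + if u ∈ T then lowerPd u h else 0 := by
  simp only [dxOn_apply, pd_sum, pd_mul, pd_X, pd_lowerPd, Finset.sum_add_distrib, ite_mul,
    one_mul, zero_mul, Finset.sum_ite_eq']
  rw [add_comm]

lemma pd_dx (u : DVar N) (h : DP N) : pd u (dx h) = dx (pd u h) + lowerPd u h := by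
  ext m
  have hu : u ∈ (m + Finsupp.single u 1).support := by simp
  rw [coeff_pd, coeff_dx_eq_dxOn subset_rfl, ← coeff_pd, pd_dxOn, if_pos hu, map_add, map_add,
    coeff_dx_eq_dxOn (Finsupp.support_mono le_self_add)]

lemma dx_eq_dxDer (h : DP N) : dx h = dxDer h := rfl

lemma dx_zero : dx (0 : DP N) = 0 := map_zero dxDer

lemma dx_add (f g : DP N) : dx (f + g) = dx f + dx g := map_add dxDer f g

lemma dx_sub (f g : DP N) : dx (f - g) = dx f - dx g := map_sub dxDer f g

lemma dx_smul (c : ℂ) (f : DP N) : dx (c • f) = c • dx f := dxDer.map_smul c f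

lemma dx_sum {ι : Type*} (s : Finset ι) (f : ι → DP N) :
    dx (∑ i ∈ s, f i) = ∑ i ∈ s, dx (f i) :=
  map_sum dxDer f s

lemma dx_mul (f g : DP N) : dx (f * g) = dx f * g + f * dx g := by
  show dxDer (f * g) = _
  rw [Derivation.leibniz, smul_eq_mul, smul_eq_mul, add_comm, mul_comm g]
  rfl

lemma iterate_dx_eq_pow (n : ℕ) (f : DP N) :
    dx^[n] f = (dxDer.toLinearMap ^ n : DP N →ₗ[ℂ] DP N) f :=
  (Module.End.pow_apply (dxDer.toLinearMap : DP N →ₗ[ℂ] DP N) n f).symm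

lemma iterate_dx_zero (n : ℕ) : dx^[n] (0 : DP N) = 0 := iterate_map_zero dxDer n

lemma iterate_dx_add (n : ℕ) (f g : DP N) : dx^[n] (f + g) = dx^[n] f + dx^[n] g :=
  iterate_map_add dxDer n f g

lemma iterate_dx_sub (n : ℕ) (f g : DP N) : dx^[n] (f - g) = dx^[n] f - dx^[n] g :=
  iterate_map_sub dxDer n f g

lemma iterate_dx_smul (n : ℕ) (c : ℂ) (f : DP N) : dx^[n] (c • f) = c • dx^[n] f :=
  Function.Commute.iterate_left (dx_smul c) n f

lemma iterate_dx_sum {ι : Type*} (n : ℕ) (s : Finset ι) (f : ι → DP N) :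
    dx^[n] (∑ i ∈ s, f i) = ∑ i ∈ s, dx^[n] (f i) := by
  simp only [iterate_dx_eq_pow, map_sum]

lemma lowerPd_eps (v : DVar N) : lowerPd v (eps : DP N) = 0 := by
  rcases v with ⟨α, _ | i⟩ | _ <;> simp [lowerPd, eps]

lemma dx_eps : dx (eps : DP N) = 0 := by
  ext m
  simp [coeff_dx_eq_dxOn subset_rfl, dxOn_apply, lowerPd_eps]

lemma dx_eps_pow_mul (k : ℕ) (x : DP N) : dx (eps ^ k * x) = eps ^ k * dx x := by
  rw [dx_mul, dx_eq_dxDer (eps ^ k), Derivation.leibniz_pow, ← dx_eq_dxDer, dx_eps, smul_zero,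
    smul_zero, zero_mul, zero_add]

lemma iterate_dx_eps_pow_mul (n k : ℕ) (x : DP N) : dx^[n] (eps ^ k * x) = eps ^ k * dx^[n] x :=
  Function.Commute.iterate_left (dx_eps_pow_mul k) n x

lemma pd_inl_eps_pow_mul (w : Fin N × ℕ) (k : ℕ) (x : DP N) :
    pd (Sum.inl w) (eps ^ k * x) = eps ^ k * pd (Sum.inl w) x := by
  rw [pd_eq_pderiv, pd_eq_pderiv, Derivation.leibniz, pderiv_pow, eps,
    pderiv_X_of_ne Sum.inr_ne_inl, mul_zero, smul_zero, add_zero, smul_eq_mul]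

lemma eps_pow_dvd_iff (k : ℕ) (f : DP N) :
    eps ^ k ∣ f ↔ ∀ m, co f m ≠ 0 → k ≤ m (Sum.inr ()) := by
  rw [eps, X_pow_dvd_iff]
  exact forall_congr' fun m =>
    ⟨fun h hc => not_lt.mp (mt h hc), fun h hlt => not_not.mp (mt h (not_le.mpr hlt))⟩

def IsJetFree (a : DP N) : Prop := ∀ (ν : Fin N) (q : ℕ), pd (Sum.inl (ν, q + 1)) a = 0

lemma OnlyV.isJetFree {f : DP N} (hf : OnlyV f) : IsJetFree f := by
  intro ν q
  ext m
  rw [coeff_pd, map_zero, ← co_eq_coeff]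
  by_contra hne
  obtain ⟨α, hα⟩ := hf _ (right_ne_zero_of_mul hne) (Sum.inl (ν, q + 1)) (by simp)
  simp at hα

lemma isJetFree_pd {a : DP N} (ha : IsJetFree a) (v : DVar N) : IsJetFree (pd v a) :=
  fun ν q => by rw [pd_comm, ha, pd_eq_pderiv, map_zero]

lemma IsJetFree.pd_iterate_dx {a : DP N} (ha : IsJetFree a) (ν : Fin N) (q n : ℕ) :
    pd (Sum.inl (ν, q)) (dx^[n] a) = (n.choose q : ℂ) • dx^[n - q] (pd (Sum.inl (ν, 0)) a) := by
  induction n generalizing q with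
  | zero =>
    rcases q with _ | q
    · simp
    · simp [ha ν q]
  | succ n ih =>
    rw [Function.iterate_succ_apply', pd_dx]
    rcases q with _ | q
    · simp [ih, lowerPd_inl_zero, Function.iterate_succ_apply']
    · rw [ih, lowerPd_inl_succ, ih, Nat.choose_succ_succ', Nat.cast_add, add_smul, dx_smul,
        Nat.add_sub_add_right]
      rcases lt_or_ge q n with h | h
      · rw [show n - q = n - (q + 1) + 1 by omega, Function.iterate_succ_apply', add_comm]
      · simp [Nat.choose_eq_zero_of_lt (show n < q + 1 by omega)]

lemma sum_comm_pairs {ι M : Type*} [Fintype ι] [AddCommMonoid M] (F : ι → ι → ι → ι → M) :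
    ∑ a, ∑ b, ∑ c, ∑ d, F a b c d = ∑ c, ∑ d, ∑ a, ∑ b, F a b c d :=
  calc _ = ∑ a, ∑ c, ∑ d, ∑ b, F a b c d :=
        Finset.sum_congr rfl fun _ _ =>
          Finset.sum_comm.trans (Finset.sum_congr rfl fun _ _ => Finset.sum_comm)
    _ = ∑ c, ∑ a, ∑ d, ∑ b, F a b c d := Finset.sum_comm
    _ = _ := Finset.sum_congr rfl fun _ _ => Finset.sum_comm

noncomputable def traceD4 (η : Matrix (Fin N) (Fin N) ℂ) (f : DP N) (ρ σ : Fin N) : DP N :=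
  ∑ μ : Fin N, ∑ ν : Fin N, η μ ν • d4 f μ ν ρ σ

lemma traceD4_comm (η : Matrix (Fin N) (Fin N) ℂ) (f : DP N) (ρ σ : Fin N) :
    traceD4 η f ρ σ = traceD4 η f σ ρ := by
  simp only [traceD4, d4, d3, pd_comm (Sum.inl (ρ, 0)) (Sum.inl (σ, 0))]

lemma cB_eq_sum_traceD4 (η : Matrix (Fin N) (Fin N) ℂ) (f : DP N) (α β : Fin N) :
    cB η f α β = ∑ ρ : Fin N, ∑ σ : Fin N, (η α ρ * η β σ) • traceD4 η f ρ σ := by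
  simp only [cB, traceD4, Finset.smul_sum, smul_smul]
  rw [sum_comm_pairs]
  refine Finset.sum_congr rfl fun ρ _ => Finset.sum_congr rfl fun σ _ =>
    Finset.sum_congr rfl fun μ _ => Finset.sum_congr rfl fun ν _ => ?_
  rw [mul_comm (η α ρ * η β σ), mul_assoc]

lemma pd_cA (η : Matrix (Fin N) (Fin N) ℂ) (f : DP N) (ν β : Fin N) :
    pd (Sum.inl (ν, 0)) (cA η f β) = ∑ ρ : Fin N, η β ρ • traceD4 η f ν ρ := by
  simp only [cA, traceD4, pd_sum, pd_smul, Finset.smul_sum, smul_smul]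
  refine Finset.sum_congr rfl fun ρ _ => ?_
  rw [Finset.sum_comm]
  refine Finset.sum_congr rfl fun μ _ => Finset.sum_congr rfl fun σ _ => ?_
  rw [d3, pd_comm (Sum.inl (σ, 0)) (Sum.inl (μ, 0)), pd_comm (Sum.inl (ρ, 0)) (Sum.inl (μ, 0)),
    pd_comm (Sum.inl (ν, 0)) (Sum.inl (μ, 0)), pd_comm (Sum.inl (ρ, 0)) (Sum.inl (σ, 0)),
    pd_comm (Sum.inl (ν, 0)) (Sum.inl (σ, 0))]
  rfl

lemma sum_smul_pd_cA_right (η : Matrix (Fin N) (Fin N) ℂ) (f : DP N) (α β : Fin N) :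
    ∑ ν : Fin N, η α ν • pd (Sum.inl (ν, 0)) (cA η f β) = cB η f α β := by
  simp only [pd_cA, cB_eq_sum_traceD4, Finset.smul_sum, smul_smul]

lemma sum_smul_pd_cA_left {η : Matrix (Fin N) (Fin N) ℂ} (hη : η.IsSymm) (f : DP N)
    (α β : Fin N) :
    ∑ μ : Fin N, η μ β • pd (Sum.inl (μ, 0)) (cA η f α) = cB η f α β := by
  simp only [pd_cA, cB_eq_sum_traceD4, Finset.smul_sum, smul_smul]
  rw [Finset.sum_comm]
  refine Finset.sum_congr rfl fun ρ _ => Finset.sum_congr rfl fun μ _ => ?_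
  rw [traceD4_comm, hη.apply μ β, mul_comm]

noncomputable def corrOp (C h : DP N) : DP N :=
  C * dx^[3] h + dx^[3] (C * h) - dx^[2] C * dx h - dx (dx^[2] C * h)

lemma Kv_eq_corrOp (η : Matrix (Fin N) (Fin N) ℂ) (f : DP N) (μ ν : Fin N) (z : DP N) :
    Kv η f μ ν z = η μ ν • dx z + (24 : ℂ)⁻¹ • (eps ^ 2 * corrOp (cB η f μ ν) z) := rfl

lemma corrOp_zero (C : DP N) : corrOp C 0 = 0 := by
  simp [corrOp, iterate_dx_zero, dx_zero]

lemma corrOp_sub (C x y : DP N) : corrOp C (x - y) = corrOp C x - corrOp C y := by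
  simp only [corrOp, iterate_dx_sub, mul_sub, dx_sub]
  ring

lemma corrOp_smul (C : DP N) (c : ℂ) (x : DP N) : corrOp C (c • x) = c • corrOp C x := by
  simp only [corrOp, iterate_dx_smul, mul_smul_comm, dx_smul, smul_sub, smul_add]

lemma corrOp_eps_pow_mul (C : DP N) (k : ℕ) (x : DP N) :
    corrOp C (eps ^ k * x) = eps ^ k * corrOp C x := by
  simp only [corrOp, iterate_dx_eps_pow_mul, mul_left_comm C, mul_left_comm (dx^[2] C),
    dx_eps_pow_mul]
  ring

/-- First-order expansion in `ε²` of one summand of the transformed operator, with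
`i - s ε² b` a Jacobian entry of the Miura map and `z - c s ε² y` its argument. -/
lemma eps_pow_four_dvd_summand_sub (i b z y C : DP N) (h c s : ℂ) (p : ℕ) :
    eps ^ 4 ∣ (i - s • (eps ^ 2 * b)) *
        dx^[p] (h • dx (z - (c * s) • (eps ^ 2 * y)) +
          s • (eps ^ 2 * corrOp C (z - (c * s) • (eps ^ 2 * y))))
      - (i * (h • dx^[p + 1] z) + s • (eps ^ 2 * (i * dx^[p] (corrOp C z)
          - i * ((c * h) • dx^[p + 1] y) - h • (b * dx^[p + 1] z)))) := by
  -- the witness collects the `ε⁴`- and `ε⁶`-coefficients of the difference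
  refine Dvd.intro ((s * s) • (c • (h • (b * dx^[p + 1] y) - i * dx^[p] (corrOp C y))
    - b * dx^[p] (corrOp C z)) + eps ^ 2 * ((s * s * s * c) • (b * dx^[p] (corrOp C y)))) ?_
  simp only [dx_sub, dx_smul, dx_eps_pow_mul, corrOp_sub, corrOp_smul, corrOp_eps_pow_mul,
    iterate_dx_add, iterate_dx_sub, iterate_dx_smul, iterate_dx_eps_pow_mul,
    Function.iterate_succ_apply]
  simp only [Algebra.smul_def, map_mul]
  ring

/-- The identity `K₁ = B ∘ η∂_x + η∂_x ∘ B*` behind the cancellation of the `ε²`-terms. -/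
lemma corrOp_eq_sum (C g : DP N) :
    corrOp C g = ∑ q ∈ Finset.range 3,
        (-1 : ℂ) ^ q • dx (dx^[q] (((Nat.choose 2 q : ℂ) • dx^[2 - q] C) * g))
      + ∑ p ∈ Finset.range 3, ((Nat.choose 2 p : ℂ) • dx^[2 - p] C) * dx^[p + 1] g := by
  simp only [corrOp, Finset.sum_range_succ, Finset.sum_range_zero, Function.iterate_succ_apply',
    Function.iterate_zero_apply, smul_mul_assoc, iterate_dx_smul, dx_smul, dx_mul, dx_add]
  norm_num
  module

lemma isJetFree_cA {f : DP N} (hf : OnlyV f) (η : Matrix (Fin N) (Fin N) ℂ) (α : Fin N) :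
    IsJetFree (cA η f α) := fun ν q => by
  have hd3 : ∀ ρ σ μ, IsJetFree (d3 f ρ σ μ) := fun ρ σ μ =>
    isJetFree_pd (isJetFree_pd (isJetFree_pd hf.isJetFree _) _) _
  simp only [cA, pd_sum, pd_smul, hd3 _ _ _ ν q, smul_zero, Finset.sum_const_zero]

/-- `∂(∂_x² c^{αμ}_μ)/∂ṽ^μ_p`: the `ε²`-part of the Jacobian of the Miura map. -/
noncomputable def miuraJac (η : Matrix (Fin N) (Fin N) ℂ) (f : DP N) (α μ : Fin N) (p : ℕ) :
    DP N :=
  (Nat.choose 2 p : ℂ) • dx^[2 - p] (pd (Sum.inl (μ, 0)) (cA η f α))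

noncomputable def jetDelta (α μ : Fin N) (p : ℕ) : DP N := if p = 0 ∧ μ = α then 1 else 0

lemma pd_Uc {f : DP N} (hf : OnlyV f) (η : Matrix (Fin N) (Fin N) ℂ) (α μ : Fin N) (p : ℕ) :
    pd (Sum.inl (μ, p)) (Uc η f α)
      = jetDelta α μ p - (24 : ℂ)⁻¹ • (eps ^ 2 * miuraJac η f α μ p) := by
  rw [Uc, pd_sub, pd_smul, pd_inl_eps_pow_mul, (isJetFree_cA hf η α).pd_iterate_dx, miuraJac,
    uv, pd_X]
  congr 1
  simp [jetDelta, Prod.ext_iff, eq_comm, and_comm]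

lemma sum_smul_miuraJac_right (η : Matrix (Fin N) (Fin N) ℂ) (f : DP N) (α β : Fin N) (q : ℕ) :
    ∑ ν : Fin N, η α ν • miuraJac η f β ν q = (Nat.choose 2 q : ℂ) • dx^[2 - q] (cB η f α β) := by
  simp only [miuraJac, smul_comm (η α _), ← Finset.smul_sum, ← iterate_dx_smul, ← iterate_dx_sum,
    sum_smul_pd_cA_right]

lemma sum_smul_miuraJac_left {η : Matrix (Fin N) (Fin N) ℂ} (hη : η.IsSymm) (f : DP N)
    (α β : Fin N) (p : ℕ) :
    ∑ μ : Fin N, η μ β • miuraJac η f α μ p = (Nat.choose 2 p : ℂ) • dx^[2 - p] (cB η f α β) := by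
  simp only [miuraJac, smul_comm (η _ β), ← Finset.smul_sum, ← iterate_dx_smul, ← iterate_dx_sum,
    sum_smul_pd_cA_left hη]

lemma ofCo_finsum_finsum_co {F : ℕ → ℕ → DP N} {n : ℕ}
    (hF : ∀ p q, n ≤ p ∨ n ≤ q → F p q = 0) :
    ofCo (fun m => ∑ᶠ p : ℕ, ∑ᶠ q : ℕ, co (F p q) m)
      = ∑ p ∈ Finset.range n, ∑ q ∈ Finset.range n, F p q := by
  ext m
  have hsupp : ∀ G : ℕ → ℂ, (∀ k, n ≤ k → G k = 0) → ∑ᶠ k, G k = ∑ k ∈ Finset.range n, G k :=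
    fun G hG => finsum_eq_sum_of_support_subset G fun k hk => by
      by_contra h
      exact hk (hG k (by simpa using h))
  have hzero : ∀ p q, n ≤ p ∨ n ≤ q → co (F p q) m = 0 := fun p q h => by
    rw [hF p q h, co_eq_coeff, map_zero]
  show ∑ᶠ p, ∑ᶠ q, co (F p q) m = _
  rw [finsum_congr fun p => hsupp _ fun q hq => hzero p q (.inr hq),
    hsupp _ fun p hp => Finset.sum_eq_zero fun q _ => hzero p q (.inl hp), map_sum]
  simp only [map_sum, co_eq_coeff]

lemma sum_jetDelta_mul (α : Fin N) (X : ℕ → Fin N → DP N) :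
    ∑ p ∈ Finset.range 3, ∑ μ : Fin N, jetDelta α μ p * X p μ = X 0 α := by
  simp [jetDelta, ite_and]

lemma sum_map_jetDelta_mul (β : Fin N) (g : DP N) (Y : Fin N → DP N → DP N)
    (hY : ∀ ν, Y ν 0 = 0) :
    ∑ q ∈ Finset.range 3, ∑ ν : Fin N, Y ν (jetDelta β ν q * g) = Y β g := by
  rw [Finset.sum_eq_single_of_mem 0 (by simp) fun q _ hq =>
    Finset.sum_eq_zero fun ν _ => by simp [jetDelta, hq, hY]]
  rw [Fintype.sum_eq_single β fun ν hν => by simp [jetDelta, hν, hY]]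
  simp [jetDelta]

noncomputable def jetSum (F : ℕ → ℕ → Fin N → Fin N → DP N) : DP N :=
  ∑ p ∈ Finset.range 3, ∑ q ∈ Finset.range 3, ∑ μ : Fin N, ∑ ν : Fin N, F p q μ ν

lemma jetSum_jetDelta_mul (α : Fin N) (X : ℕ → ℕ → Fin N → Fin N → DP N) :
    jetSum (fun p q μ ν => jetDelta α μ p * X p q μ ν)
      = ∑ q ∈ Finset.range 3, ∑ ν : Fin N, X 0 q α ν := by
  simp only [jetSum, ← Finset.mul_sum]
  rw [Finset.sum_congr rfl fun p _ => Finset.sum_comm]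
  simp only [← Finset.mul_sum]
  exact sum_jetDelta_mul α _

lemma jetSum_map_jetDelta_mul (β : Fin N) (g : DP N) (Y : ℕ → Fin N → Fin N → DP N → DP N)
    (hY : ∀ p μ ν, Y p μ ν 0 = 0) :
    jetSum (fun p q μ ν => Y p μ ν (jetDelta β ν q * g))
      = ∑ p ∈ Finset.range 3, ∑ μ : Fin N, Y p μ β g := by
  refine Finset.sum_congr rfl fun p _ => ?_
  rw [Finset.sum_comm]
  exact Finset.sum_congr rfl fun μ _ => sum_map_jetDelta_mul β g (Y p μ) (hY p μ)

lemma jetSum_jetDelta_mul_smul_dx (η : Matrix (Fin N) (Fin N) ℂ) (α β : Fin N) (g : DP N) :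
    jetSum (fun p q μ ν => jetDelta α μ p * (η μ ν • dx^[p + 1] (jetDelta β ν q * g)))
      = η α β • dx g := by
  rw [jetSum_jetDelta_mul]
  exact sum_map_jetDelta_mul β g (fun ν x => η α ν • dx^[0 + 1] x)
    fun ν => by rw [iterate_dx_zero, smul_zero]

lemma jetSum_jetDelta_mul_corrOp (η : Matrix (Fin N) (Fin N) ℂ) (f : DP N) (α β : Fin N)
    (g : DP N) :
    jetSum (fun p q μ ν => jetDelta α μ p * dx^[p] (corrOp (cB η f μ ν) (jetDelta β ν q * g)))
      = corrOp (cB η f α β) g := by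
  rw [jetSum_jetDelta_mul]
  exact sum_map_jetDelta_mul β g (fun ν x => dx^[0] (corrOp (cB η f α ν) x))
    fun ν => corrOp_zero _

lemma jetSum_jetDelta_mul_smul_miuraJac (η : Matrix (Fin N) (Fin N) ℂ) (f : DP N)
    (α β : Fin N) (g : DP N) :
    jetSum (fun p q μ ν => jetDelta α μ p *
        (((-1 : ℂ) ^ q * η μ ν) • dx^[p + 1] (dx^[q] (miuraJac η f β ν q * g))))
      = ∑ q ∈ Finset.range 3, (-1 : ℂ) ^ q •
          dx (dx^[q] (((Nat.choose 2 q : ℂ) • dx^[2 - q] (cB η f α β)) * g)) := by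
  rw [jetSum_jetDelta_mul]
  refine Finset.sum_congr rfl fun q _ => ?_
  rw [← sum_smul_miuraJac_right]
  simp only [Finset.sum_mul, iterate_dx_sum, dx_sum, Finset.smul_sum, smul_mul_assoc,
    iterate_dx_smul, dx_smul, smul_smul, zero_add, Function.iterate_one]

lemma jetSum_smul_miuraJac_mul_jetDelta {η : Matrix (Fin N) (Fin N) ℂ} (hη : η.IsSymm)
    (f : DP N) (α β : Fin N) (g : DP N) :
    jetSum (fun p q μ ν => η μ ν • (miuraJac η f α μ p * dx^[p + 1] (jetDelta β ν q * g)))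
      = ∑ p ∈ Finset.range 3, ((Nat.choose 2 p : ℂ) • dx^[2 - p] (cB η f α β)) * dx^[p + 1] g := by
  rw [jetSum_map_jetDelta_mul β g (fun p μ ν x => η μ ν • (miuraJac η f α μ p * dx^[p + 1] x))
    fun p μ ν => by rw [iterate_dx_zero, mul_zero, smul_zero]]
  refine Finset.sum_congr rfl fun p _ => ?_
  rw [← sum_smul_miuraJac_left hη]
  simp only [Finset.sum_mul, smul_mul_assoc]

noncomputable def KvTSummand (η : Matrix (Fin N) (Fin N) ℂ) (f : DP N) (α β : Fin N) (g : DP N)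
    (p q : ℕ) (μ ν : Fin N) : DP N :=
  pd (Sum.inl (μ, p)) (Uc η f α) *
    dx^[p] (Kv η f μ ν (((-1 : ℂ) ^ q) • dx^[q] (pd (Sum.inl (ν, q)) (Uc η f β) * g)))

/-- `KvTSummand` modulo `ε⁴`. -/
noncomputable def KvTSummandLin (η : Matrix (Fin N) (Fin N) ℂ) (f : DP N) (α β : Fin N)
    (g : DP N) (p q : ℕ) (μ ν : Fin N) : DP N :=
  jetDelta α μ p * (η μ ν • dx^[p + 1] (jetDelta β ν q * g))
    + (24 : ℂ)⁻¹ • (eps ^ 2 *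
      (jetDelta α μ p * dx^[p] (corrOp (cB η f μ ν) (jetDelta β ν q * g))
        - jetDelta α μ p *
          (((-1 : ℂ) ^ q * η μ ν) • dx^[p + 1] (dx^[q] (miuraJac η f β ν q * g)))
        - η μ ν • (miuraJac η f α μ p * dx^[p + 1] (jetDelta β ν q * g))))

lemma pd_Uc_of_three_le {f : DP N} (hf : OnlyV f) (η : Matrix (Fin N) (Fin N) ℂ) (α μ : Fin N)
    {p : ℕ} (hp : 3 ≤ p) : pd (Sum.inl (μ, p)) (Uc η f α) = 0 := by
  rw [pd_Uc hf, miuraJac, Nat.choose_eq_zero_of_lt (by omega : 2 < p)]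
  simp [jetDelta, show p ≠ 0 by omega]

lemma KvT_eq_jetSum {f : DP N} (hf : OnlyV f) (η : Matrix (Fin N) (Fin N) ℂ) (α β : Fin N)
    (g : DP N) : KvT η f α β g = jetSum (KvTSummand η f α β g) := by
  refine ofCo_finsum_finsum_co (F := fun p q => ∑ μ : Fin N, ∑ ν : Fin N,
    KvTSummand η f α β g p q μ ν) fun p q hpq =>
      Finset.sum_eq_zero fun μ _ => Finset.sum_eq_zero fun ν _ => ?_
  rcases hpq with hp | hq
  · rw [KvTSummand, pd_Uc_of_three_le hf η α μ hp, zero_mul]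
  · simp [KvTSummand, pd_Uc_of_three_le hf η β ν hq, iterate_dx_zero, Kv_eq_corrOp, dx_zero,
      corrOp_zero]

lemma neg_one_pow_smul_iterate_dx_pd_Uc_mul {f : DP N} (hf : OnlyV f)
    (η : Matrix (Fin N) (Fin N) ℂ) (β ν : Fin N) (q : ℕ) (g : DP N) :
    ((-1 : ℂ) ^ q) • dx^[q] (pd (Sum.inl (ν, q)) (Uc η f β) * g)
      = jetDelta β ν q * g
        - ((-1 : ℂ) ^ q * (24 : ℂ)⁻¹) • (eps ^ 2 * dx^[q] (miuraJac η f β ν q * g)) := by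
  rw [pd_Uc hf, sub_mul, iterate_dx_sub, smul_sub, smul_mul_assoc, mul_assoc, iterate_dx_smul,
    iterate_dx_eps_pow_mul, smul_smul]
  congr 1
  by_cases h : q = 0 ∧ ν = β
  · simp [jetDelta, h.1]
  · simp [jetDelta, h, iterate_dx_zero]

lemma eps_pow_four_dvd_KvTSummand_sub {f : DP N} (hf : OnlyV f) (η : Matrix (Fin N) (Fin N) ℂ)
    (α β : Fin N) (g : DP N) (p q : ℕ) (μ ν : Fin N) :
    eps ^ 4 ∣ KvTSummand η f α β g p q μ ν - KvTSummandLin η f α β g p q μ ν := by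
  rw [KvTSummand, pd_Uc hf, neg_one_pow_smul_iterate_dx_pd_Uc_mul hf, Kv_eq_corrOp]
  exact eps_pow_four_dvd_summand_sub _ _ _ _ _ _ _ _ p

lemma jetSum_KvTSummandLin {η : Matrix (Fin N) (Fin N) ℂ} (hη : η.IsSymm) (f : DP N)
    (α β : Fin N) (g : DP N) : jetSum (KvTSummandLin η f α β g) = η α β • dx g :=
  calc jetSum (KvTSummandLin η f α β g)
      = η α β • dx g + (24 : ℂ)⁻¹ • (eps ^ 2 * (corrOp (cB η f α β) g
          - ∑ q ∈ Finset.range 3, (-1 : ℂ) ^ q •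
              dx (dx^[q] (((Nat.choose 2 q : ℂ) • dx^[2 - q] (cB η f α β)) * g))
          - ∑ p ∈ Finset.range 3,
              ((Nat.choose 2 p : ℂ) • dx^[2 - p] (cB η f α β)) * dx^[p + 1] g)) := by
        rw [← jetSum_jetDelta_mul_smul_dx, ← jetSum_jetDelta_mul_corrOp,
          ← jetSum_jetDelta_mul_smul_miuraJac, ← jetSum_smul_miuraJac_mul_jetDelta hη]
        simp only [jetSum, KvTSummandLin, Finset.sum_add_distrib, Finset.sum_sub_distrib,
          mul_sub, smul_sub, Finset.mul_sum, Finset.smul_sum]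
    _ = η α β • dx g := by
        rw [corrOp_eq_sum, sub_sub, sub_self, mul_zero, smul_zero, add_zero]

theorem eps_pow_four_dvd_KvT_sub {η : Matrix (Fin N) (Fin N) ℂ} (hη : η.IsSymm) {f : DP N}
    (hf : OnlyV f) (α β : Fin N) (g : DP N) : eps ^ 4 ∣ KvT η f α β g - η α β • dx g := by
  rw [KvT_eq_jetSum hf, ← jetSum_KvTSummandLin hη f α β g, jetSum, jetSum]
  simp only [← Finset.sum_sub_distrib]
  exact Finset.dvd_sum fun p _ => Finset.dvd_sum fun q _ => Finset.dvd_sum fun μ _ =>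
    Finset.dvd_sum fun ν _ => eps_pow_four_dvd_KvTSummand_sub hf η α β g p q μ ν

end DP

open DP in
theorem statement11_general (N : ℕ) (η : Matrix (Fin N) (Fin N) ℂ)
    (hsym : η.IsSymm)
    (f : DP N) (hf : OnlyV f) :
    ∀ (α β : Fin N) (g : DP N),
      (∀ m, co g m ≠ 0 → m (Sum.inr ()) = 0) →
      ∀ m, co (KvT η f α β g - η α β • dx g) m ≠ 0 → 4 ≤ m (Sum.inr ()) := by
  intro α β g _
  exact (eps_pow_dvd_iff 4 _).mp (eps_pow_four_dvd_KvT_sub hsym hf α β g)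

open DP in
/-- the genus-one Miura transformation trivializes the
genus-one correction of the hamiltonian operator.  The Miura transformation
`ṽ^α ↦ u^α(ṽ) = ṽ^α − (ε²/24)∂_x²c^{αμ}_μ` transforms the operator `K_ṽ` into
`η∂_x + O(ε⁴)`: tested against any `ε`-free differential polynomial `g` (which
determines the operator's coefficients), the difference
`(K_ṽ)_u(g) − η^{αβ}∂_x g` has `ε`-order at least `4`, i.e. its `ε⁰`- and
`ε²`-parts are `η^{αβ}∂_x` and `0` respectively. -/
theorem statement11 (N : ℕ) (η : Matrix (Fin N) (Fin N) ℂ)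
    (hsym : η.IsSymm) (hnd : IsUnit η.det)
    (f : DP N) (hf : OnlyV f) :
    ∀ (α β : Fin N) (g : DP N),
      (∀ m, co g m ≠ 0 → m (Sum.inr ()) = 0) →
      ∀ m, co (KvT η f α β g - η α β • dx g) m ≠ 0 → 4 ≤ m (Sum.inr ()) :=
  statement11_general N η hsym f hf
end

section
/- Let η be a symmetric nondegenerate N×N complex matrix and let F ∈ ℂ[[t^*_*,ε]] (variables t^α_d, 1 ≤ α ≤ N, d ≥ 0) contain only even powers of ε and satisfy the string equation ∂F/∂t^1_0 = Σ_{n≥0} t^α_{n+1}∂F/∂t^α_n + ½η_{αβ}t^α_0t^β_0 + ε²c₁ for some constant c₁ ∈ ℂ. Define (w^⊤)^α := η^{αμ}(∂²F/∂t^μ_0∂t^1_0)|_{t^1_0↦t^1_0+x} ∈ ℂ[[x,t^*_*,ε]] and (w^⊤)^α_n := ∂_x^n(w^⊤)^α. Then: (i) O_str (w^⊤)^α_n = δ_{n,0}δ^{α,1} in ℂ[[x,t^*_*,ε]], where O_str := ∂/∂t^1_0 − Σ_{m≥0} t^γ_{m+1}∂/∂t^γ_m; (ii) (w^⊤)^α_n|_{x=0}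 = t^α_n + δ_{n,1}δ^{α,1} + R^α_n(t^*_*) + O(ε²), where R^α_n ∈ ℂ[[t^*_*]] is a series in which the coefficient of every monomial t^{α_1}_{d_1}⋯t^{α_m}_{d_m} vanishes unless d_1 + ⋯ + d_m ≥ n + 1. -/
/-!
Formal power series in the variables `x`, `t^α_d` and `ε` (the ring
`ℂ[[x, t^*_*, ε]]`), together with the operations used in the statements.
-/

/-- The variables `t^α_d`, `x` and `ε`. -/
inductive BVar (N : ℕ) : Type
  | t : Fin N → ℕ → BVar N
  | x : BVar N
  | e : BVar N
  deriving DecidableEq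

/-- The ring `ℂ[[x, t^*_*, ε]]`. -/
abbrev Big (N : ℕ) : Type := MvPowerSeries (BVar N) ℂ

namespace Big

variable {N : ℕ}

/-- Coefficient of a monomial. -/
noncomputable def co (G : Big N) (μ : BVar N →₀ ℕ) : ℂ := MvPowerSeries.coeff (R := ℂ) μ G

/-- Build a power series from its coefficients. -/
def ofCo (F : (BVar N →₀ ℕ) → ℂ) : Big N := F

/-- Partial derivative with respect to one of the variables. -/
noncomputable def pd (v : BVar N) (G : Big N) : Big N :=
  ofCo fun μ => ((μ v : ℂ) + 1) * co G (μ + Finsupp.single v 1)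

/-- `Σ_{α,n} t^α_{n+1} ∂G/∂t^α_n`. -/
noncomputable def stringSum (G : Big N) : Big N :=
  ofCo fun μ => ∑ᶠ p : Fin N × ℕ,
    co (MvPowerSeries.X (BVar.t p.1 (p.2 + 1)) * pd (BVar.t p.1 p.2) G) μ

/-- `Σ_{α,n} t^α_n ∂G/∂t^α_n`. -/
noncomputable def dilatonSum (G : Big N) : Big N :=
  ofCo fun μ => ∑ᶠ p : Fin N × ℕ,
    co (MvPowerSeries.X (BVar.t p.1 p.2) * pd (BVar.t p.1 p.2) G) μ

/-- `ε ∂G/∂ε`. -/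
noncomputable def epsDel (G : Big N) : Big N :=
  ofCo fun μ => (μ BVar.e : ℂ) * co G μ

/-- Independence of `x`. -/
def XFree (G : Big N) : Prop := ∀ μ, co G μ ≠ 0 → μ BVar.x = 0

/-- Containing only even powers of `ε`. -/
def EvenEps (G : Big N) : Prop := ∀ μ, co G μ ≠ 0 → Even (μ BVar.e)

/-- `½ η_{αβ} t^α_0 t^β_0` (with lowered indices given by the inverse matrix). -/
noncomputable def quadEta (η : Matrix (Fin N) (Fin N) ℂ) : Big N :=
  (2 : ℂ)⁻¹ • ∑ α : Fin N, ∑ β : Fin N,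
    η⁻¹ α β • (MvPowerSeries.X (BVar.t α 0) * MvPowerSeries.X (BVar.t β 0))

/-- `ε²`. -/
noncomputable def epsSq : Big N := MvPowerSeries.X (BVar.e) ^ 2

/-- The substitution `t^1_0 ↦ t^1_0 + x` in an `x`-free series. -/
noncomputable def shiftX [NeZero N] (G : Big N) : Big N :=
  ofCo fun μ =>
    (Nat.choose (μ (BVar.t 0 0) + μ BVar.x) (μ BVar.x) : ℂ) *
      co G (μ.erase BVar.x + Finsupp.single (BVar.t 0 0) (μ BVar.x))

/-- The series `(w^⊤)^α = η^{αμ} (∂²F/∂t^μ_0 ∂t^1_0)|_{t^1_0 ↦ t^1_0 + x}`. -/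
noncomputable def wt [NeZero N] (η : Matrix (Fin N) (Fin N) ℂ) (F : Big N)
    (α : Fin N) : Big N :=
  ∑ μ : Fin N, η α μ • shiftX (pd (BVar.t μ 0) (pd (BVar.t 0 0) F))

/-- Evaluation at `x = 0` (the result regarded again as an element of the big
ring, not involving `x`). -/
noncomputable def evalX0 (G : Big N) : Big N :=
  ofCo fun μ => if μ BVar.x = 0 then co G μ else 0

/-- Total descendent degree of a monomial in the `t`-variables:
`t^{α_1}_{d_1} ⋯ t^{α_n}_{d_n} ↦ d_1 + ⋯ + d_n`. -/
noncomputable def tdeg (μ : BVar N →₀ ℕ) : ℕ :=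
  ∑ v ∈ μ.support,
    (match v with
      | BVar.t _ d => d * μ v
      | _ => 0)

/-- Iterated partial derivative `∂^n/∂t^{α_1}_{d_1}⋯∂t^{α_n}_{d_n}`. -/
noncomputable def dList (L : List (Fin N × ℕ)) (G : Big N) : Big N :=
  L.foldr (fun p G => pd (BVar.t p.1 p.2) G) G

/-- The value substituted for the variable `u^α_n` (resp. `ε`): the `n`-th
`x`-derivative of the `α`-th component of the given family (resp. `ε`). -/
noncomputable def fac (W : Fin N → Big N) : DVar N → Big N
  | Sum.inl (α, n) => (pd BVar.x)^[n] (W α)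
  | Sum.inr _ => MvPowerSeries.X BVar.e

/-- Substitution of a family of power series (and of its `x`-derivatives) into
a differential polynomial: `f(u; u_x, u_{xx}, …)` evaluated at `u^α = W α`. -/
noncomputable def evalDP (f : DP N) (W : Fin N → Big N) : Big N :=
  ofCo fun μ => ∑ᶠ m : DVar N →₀ ℕ,
    DP.co f m * co (∏ v ∈ m.support, fac W v ^ m v) μ

end Big

/-!
Write `P^α = η^{αμ} ∂F/∂t^μ_0` and `W^α = ∂P^α/∂t^1_0`, so that `w^⊤ = W|_{t^1_0 ↦ t^1_0 + x}`,
and `S = Σ t^γ_{m+1} ∂/∂t^γ_m`. Differentiating the string equation along `t^μ_0` (which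
commutes with `S`) and contracting with `η` gives `W = S P + t^α_0`, hence
`O_str W = ∂W/∂t^1_0 − S W = δ^{α,1}`. The shift turns `∂_x` into `∂/∂t^1_0` and commutes with
`∂/∂t^1_0` and with `S`, so (i) follows because `O_str` commutes with `∂/∂t^1_0`.
For (ii), `∂/∂t^1_0 = S + O_str` gives `∂^n W/∂(t^1_0)^n = S^n W + δ_{n,1}δ^{α,1}
= t^α_n + δ_{n,1}δ^{α,1} + S^{n+1} P`. Each application of `S` raises the total descendant
degree by one and preserves the parity in `ε`, so splitting `S^{n+1} P` into its `ε`-free part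
and the rest gives `R^α_n` and the `O(ε²)` term.
-/

lemma Finsupp.exists_eq_add_single_of_ne_zero {σ : Type*} {μ : σ →₀ ℕ} {w : σ} (h : μ w ≠ 0) :
    ∃ ν, μ = ν + Finsupp.single w 1 := by
  obtain ⟨ν, hν⟩ := le_iff_exists_add.mp (single_le_iff.mpr (Nat.one_le_iff_ne_zero.mpr h))
  exact ⟨ν, hν.trans (add_comm _ _)⟩

lemma Nat.add_one_mul_choose_add_one_add (a b : ℕ) :
    (a + 1) * (a + 1 + b).choose b = (a + b).choose b * (a + b + 1) := by
  have h := Nat.add_one_mul_choose_eq (a + b) a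
  rw [Nat.choose_symm_add] at h
  rw [← Nat.choose_symm_add, Nat.add_right_comm]
  linarith

lemma Matrix.sum_smul_sum_inv_smul {n R M : Type*} [Fintype n] [DecidableEq n] [CommRing R]
    [AddCommGroup M] [Module R M] {A : Matrix n n R} (hA : IsUnit A.det) (v : n → M) (i : n) :
    ∑ j, A i j • ∑ k, A⁻¹ j k • v k = v i := by
  simp only [Finset.smul_sum, smul_smul]
  rw [Finset.sum_comm]
  simp only [← Finset.sum_smul, ← Matrix.mul_apply, Matrix.mul_nonsing_inv A hA, Matrix.one_apply,
    ite_smul, one_smul, zero_smul, Finset.sum_ite_eq, Finset.mem_univ, if_true]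

namespace Big

open Finsupp MvPowerSeries

variable {N : ℕ}

lemma ext_co {G H : Big N} (h : ∀ μ, co G μ = co H μ) : G = H :=
  MvPowerSeries.ext h

lemma co_ofCo (f : (BVar N →₀ ℕ) → ℂ) (μ : BVar N →₀ ℕ) : co (ofCo f) μ = f μ :=
  rfl

@[simp] lemma co_zero (μ : BVar N →₀ ℕ) : co (0 : Big N) μ = 0 :=
  map_zero _

lemma co_add (G H : Big N) (μ : BVar N →₀ ℕ) : co (G + H) μ = co G μ + co H μ :=
  map_add _ _ _

lemma co_smul (c : ℂ) (G : Big N) (μ : BVar N →₀ ℕ) : co (c • G) μ = c * co G μ :=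
  map_smul _ _ _

lemma co_X_mul_add_single (w : BVar N) (H : Big N) (μ : BVar N →₀ ℕ) :
    co (X w * H) (μ + single w 1) = co H μ := by
  rw [co, X_def, add_comm, coeff_add_monomial_mul, one_mul]
  rfl

lemma co_X_mul_of_eq_zero {w : BVar N} {μ : BVar N →₀ ℕ} (hμ : μ w = 0) (H : Big N) :
    co (X w * H) μ = 0 := by
  rw [co, X_def, coeff_monomial_mul, if_neg]
  simp [single_le_iff, hμ]

lemma co_pd (v : BVar N) (G : Big N) (μ : BVar N →₀ ℕ) :
    co (pd v G) μ = ((μ v : ℂ) + 1) * co G (μ + single v 1) :=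
  rfl

lemma co_ne_zero_of_co_pd_ne_zero {v : BVar N} {G : Big N} {μ : BVar N →₀ ℕ}
    (h : co (pd v G) μ ≠ 0) : co G (μ + single v 1) ≠ 0 :=
  right_ne_zero_of_mul h

lemma pd_eq_pderiv (v : BVar N) : pd v = ⇑(pderiv ℂ v) := by
  funext G
  ext μ
  rw [coeff_pderiv, mul_comm]
  rfl

lemma pd_comm (v w : BVar N) (G : Big N) : pd v (pd w G) = pd w (pd v G) := by
  obtain rfl | hvw := eq_or_ne v w
  · rfl
  refine ext_co fun μ => ?_
  simp only [co_pd, Finsupp.add_apply, single_eq_of_ne hvw, single_eq_of_ne hvw.symm,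
    add_right_comm μ]
  push_cast
  ring

lemma iterate_pd_C (v : BVar N) (c : ℂ) (n : ℕ) :
    (pd v)^[n] (C c) = C (if n = 0 then c else 0) := by
  induction n with
  | zero => simp
  | succ n ih =>
    rw [Function.iterate_succ_apply', ih, pd_eq_pderiv, pderiv_C]
    simp

lemma C_ite_ite (p q : Prop) [Decidable p] [Decidable q] :
    (C (if p then (if q then 1 else 0) else 0) : Big N) = if p ∧ q then 1 else 0 := by
  split_ifs <;> simp_all

noncomputable def stringTerm (p : Fin N × ℕ) (G : Big N) : Big N :=
  X (BVar.t p.1 (p.2 + 1)) * pd (BVar.t p.1 p.2) G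

/-- The only summands of `stringSum` that can contribute to the coefficient of `μ`. -/
noncomputable def stringIdx (μ : BVar N →₀ ℕ) : Finset (Fin N × ℕ) :=
  μ.support.preimage (fun p => BVar.t p.1 (p.2 + 1)) <| Function.Injective.injOn fun p q h => by
    simp only [BVar.t.injEq, Nat.add_right_cancel_iff] at h
    exact Prod.ext h.1 h.2

lemma mem_stringIdx {μ : BVar N →₀ ℕ} {p : Fin N × ℕ} :
    p ∈ stringIdx μ ↔ μ (BVar.t p.1 (p.2 + 1)) ≠ 0 := by
  rw [stringIdx, Finset.mem_preimage, Finsupp.mem_support_iff]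

lemma co_stringSum (G : Big N) (μ : BVar N →₀ ℕ) :
    co (stringSum G) μ = ∑ p ∈ stringIdx μ, co (stringTerm p G) μ := by
  refine finsum_eq_sum_of_support_subset (fun p => co (stringTerm p G) μ) fun p hp => ?_
  by_contra hμ
  exact hp (co_X_mul_of_eq_zero (not_not.mp (mt mem_stringIdx.mpr hμ)) _)

lemma stringSum_comm_of_co {L : Big N → Big N} (c : (BVar N →₀ ℕ) → ℂ)
    (φ : (BVar N →₀ ℕ) → BVar N →₀ ℕ) (hL : ∀ G μ, co (L G) μ = c μ * co G (φ μ))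
    (hφ : ∀ μ, stringIdx (φ μ) = stringIdx μ)
    (hT : ∀ p G, L (stringTerm p G) = stringTerm p (L G)) (G : Big N) :
    L (stringSum G) = stringSum (L G) := by
  refine ext_co fun μ => ?_
  simp only [hL, co_stringSum, hφ, Finset.mul_sum, ← hT]

lemma stringSum_add (G H : Big N) : stringSum (G + H) = stringSum G + stringSum H := by
  refine ext_co fun μ => ?_
  simp only [co_add, co_stringSum, stringTerm, pd_eq_pderiv, map_add, mul_add,
    Finset.sum_add_distrib]

lemma stringSum_smul (c : ℂ) (G : Big N) : stringSum (c • G) = c • stringSum G := by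
  refine ext_co fun μ => ?_
  simp only [co_smul, co_stringSum, Finset.mul_sum, stringTerm, pd_eq_pderiv,
    (pderiv ℂ _).map_smul, mul_smul_comm]

noncomputable def stringSumₗ : Big N →ₗ[ℂ] Big N where
  toFun := stringSum
  map_add' := stringSum_add
  map_smul' := stringSum_smul

lemma coe_stringSumₗ : ⇑(stringSumₗ : Big N →ₗ[ℂ] Big N) = stringSum := rfl

lemma stringSum_C (c : ℂ) : stringSum (C c : Big N) = 0 := by
  refine ext_co fun μ => ?_
  simp [co_stringSum, stringTerm, pd_eq_pderiv]

lemma stringSum_X (γ : Fin N) (m : ℕ) :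
    stringSum (X (BVar.t γ m) : Big N) = X (BVar.t γ (m + 1)) := by
  have hself : stringTerm (γ, m) (X (BVar.t γ m)) = X (BVar.t γ (m + 1)) := by
    rw [stringTerm, pd_eq_pderiv, pderiv_X_self, mul_one]
  refine ext_co fun μ => ?_
  rw [co_stringSum, Finset.sum_eq_single (γ, m), hself]
  · intro p _ hp
    rw [stringTerm, pd_eq_pderiv, pderiv_X_of_ne, mul_zero, co_zero]
    exact fun h => hp (by simp_all)
  · intro hμ
    rw [stringTerm, co_X_mul_of_eq_zero (not_not.mp (mt mem_stringIdx.mpr hμ))]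

lemma stringSum_iterate_X (γ : Fin N) (m n : ℕ) :
    stringSum^[n] (X (BVar.t γ m) : Big N) = X (BVar.t γ (m + n)) := by
  induction n with
  | zero => rfl
  | succ n ih => rw [Function.iterate_succ_apply', ih, stringSum_X, add_assoc]

lemma pd_stringSum {v : BVar N} (hv : ∀ p : Fin N × ℕ, v ≠ BVar.t p.1 (p.2 + 1))
    (G : Big N) : pd v (stringSum G) = stringSum (pd v G) := by
  refine stringSum_comm_of_co (L := pd v) (fun μ => (μ v : ℂ) + 1) (· + single v 1)
    (fun _ _ => rfl) (fun μ => ?_) (fun p G => ?_) G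
  · ext p
    rw [mem_stringIdx, mem_stringIdx, Finsupp.add_apply, single_eq_of_ne (hv p).symm, add_zero]
  · simp only [stringTerm]
    rw [pd_comm _ v, pd_eq_pderiv, Derivation.leibniz, pderiv_X_of_ne (hv p).symm, smul_zero,
      add_zero, smul_eq_mul]

lemma exists_of_co_stringSum_ne_zero {G : Big N} {μ : BVar N →₀ ℕ}
    (h : co (stringSum G) μ ≠ 0) : ∃ (p : Fin N × ℕ) (ν : BVar N →₀ ℕ),
      co G (ν + single (BVar.t p.1 p.2) 1) ≠ 0 ∧ μ = ν + single (BVar.t p.1 (p.2 + 1)) 1 := by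
  rw [co_stringSum] at h
  obtain ⟨p, hp, hterm⟩ := Finset.exists_ne_zero_of_sum_ne_zero h
  obtain ⟨ν, rfl⟩ := Finsupp.exists_eq_add_single_of_ne_zero (mem_stringIdx.mp hp)
  rw [stringTerm, co_X_mul_add_single] at hterm
  exact ⟨p, ν, co_ne_zero_of_co_pd_ne_zero hterm, rfl⟩

def tIndex : BVar N → ℕ
  | BVar.t _ d => d
  | _ => 0

lemma tdeg_eq_weight (μ : BVar N →₀ ℕ) : tdeg μ = weight tIndex μ := by
  rw [tdeg, weight_apply, Finsupp.sum]
  refine Finset.sum_congr rfl fun v _ => ?_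
  cases v <;> simp [tIndex, mul_comm]

lemma tdeg_add_single (ν : BVar N →₀ ℕ) (γ : Fin N) (d : ℕ) :
    tdeg (ν + single (BVar.t γ d) 1) = tdeg ν + d := by
  rw [tdeg_eq_weight, tdeg_eq_weight, map_add, weight_single, one_smul]
  rfl

lemma le_tdeg_of_co_stringSum_iterate_ne_zero {G : Big N} (k : ℕ) {μ : BVar N →₀ ℕ}
    (h : co (stringSum^[k] G) μ ≠ 0) : k ≤ tdeg μ := by
  induction k generalizing μ with
  | zero => exact Nat.zero_le _
  | succ k ih =>
    rw [Function.iterate_succ_apply'] at h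
    obtain ⟨p, ν, hν, rfl⟩ := exists_of_co_stringSum_ne_zero h
    have := ih hν
    rw [tdeg_add_single] at this ⊢
    omega

lemma EvenEps.stringSum {G : Big N} (hG : EvenEps G) : EvenEps (stringSum G) := by
  intro μ h
  obtain ⟨p, ν, hν, rfl⟩ := exists_of_co_stringSum_ne_zero h
  simpa using hG _ hν

lemma EvenEps.iterate_stringSum {G : Big N} (hG : EvenEps G) (k : ℕ) :
    EvenEps (Big.stringSum^[k] G) := by
  induction k with
  | zero => exact hG
  | succ k ih => exact Function.iterate_succ_apply' Big.stringSum k G ▸ ih.stringSum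

lemma EvenEps.exists_eq_add {G : Big N} (hG : EvenEps G) :
    ∃ R E : Big N, G = R + E ∧ (∀ μ, co R μ ≠ 0 → co G μ ≠ 0 ∧ μ BVar.e = 0) ∧
      ∀ μ, co E μ ≠ 0 → 2 ≤ μ BVar.e := by
  classical
  refine ⟨ofCo fun μ => if μ BVar.e = 0 then co G μ else 0,
    ofCo fun μ => if μ BVar.e = 0 then 0 else co G μ, ?_, fun μ h => ?_, fun μ h => ?_⟩
  · refine ext_co fun μ => ?_
    rw [co_add, co_ofCo, co_ofCo]
    split_ifs <;> simp
  · rw [co_ofCo, ne_eq, ite_eq_right_iff, Classical.not_imp] at h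
    exact ⟨h.2, h.1⟩
  · rw [co_ofCo, ne_eq, ite_eq_left_iff, Classical.not_imp] at h
    obtain ⟨k, hk⟩ := hG μ h.2
    omega

lemma co_evalX0 (G : Big N) (μ : BVar N →₀ ℕ) :
    co (evalX0 G) μ = if μ BVar.x = 0 then co G μ else 0 :=
  rfl

lemma co_evalX0_ne_zero {G : Big N} {μ : BVar N →₀ ℕ} (h : co (evalX0 G) μ ≠ 0) :
    μ BVar.x = 0 ∧ co G μ ≠ 0 := by
  rwa [co_evalX0, ne_eq, ite_eq_right_iff, Classical.not_imp] at h

lemma evalX0_add (G H : Big N) : evalX0 (G + H) = evalX0 G + evalX0 H := by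
  refine ext_co fun μ => ?_
  rw [co_evalX0, co_add, co_add, co_evalX0, co_evalX0]
  split_ifs <;> simp

lemma evalX0_eq_self {G : Big N} (hG : XFree G) : evalX0 G = G := by
  refine ext_co fun μ => ?_
  rw [co_evalX0]
  split_ifs with hx
  · rfl
  · by_contra hne
    exact hx (hG μ (Ne.symm hne))

lemma xFree_C (c : ℂ) : XFree (C c : Big N) := by
  intro μ h
  rw [co, coeff_C, ne_eq, ite_eq_right_iff, Classical.not_imp] at h
  simp [h.1]

lemma xFree_X {w : BVar N} (hw : w ≠ BVar.x) : XFree (X w : Big N) := by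
  classical
  intro μ h
  rw [co, coeff_X, ne_eq, ite_eq_right_iff, Classical.not_imp] at h
  simp [h.1, single_eq_of_ne hw.symm]

section shift

variable [NeZero N]

/-- The monomial `μ` with its power of `x` moved onto `t^1_0`: the coefficient of
`x^b (t^1_0)^a m` in `shiftX G` is `C(a+b, b)` times that of `(t^1_0)^{a+b} m` in `G`. -/
noncomputable def shiftExp (μ : BVar N →₀ ℕ) : BVar N →₀ ℕ :=
  μ.erase BVar.x + single (BVar.t 0 0) (μ BVar.x)

lemma co_shiftX (G : Big N) (μ : BVar N →₀ ℕ) :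
    co (shiftX G) μ = ((μ (BVar.t 0 0) + μ BVar.x).choose (μ BVar.x) : ℂ) * co G (shiftExp μ) :=
  rfl

lemma shiftExp_add_single {v : BVar N} (hv : v ≠ BVar.x) (μ : BVar N →₀ ℕ) :
    shiftExp (μ + single v 1) = shiftExp μ + single v 1 := by
  rw [shiftExp, shiftExp, erase_add, erase_single_ne hv.symm, Finsupp.add_apply,
    single_eq_of_ne hv.symm, add_zero, add_right_comm]

lemma shiftExp_add_single_x (μ : BVar N →₀ ℕ) :
    shiftExp (μ + single BVar.x 1) = shiftExp μ + single (BVar.t 0 0) 1 := by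
  rw [shiftExp, shiftExp, erase_add, erase_single, add_zero, Finsupp.add_apply, single_eq_same,
    single_add, add_assoc]

lemma shiftExp_apply_t (μ : BVar N →₀ ℕ) :
    shiftExp μ (BVar.t 0 0) = μ (BVar.t 0 0) + μ BVar.x := by
  rw [shiftExp, Finsupp.add_apply, erase_ne (by simp), single_eq_same]

lemma shiftExp_apply_of_ne {v : BVar N} (h0 : v ≠ BVar.t 0 0) (hx : v ≠ BVar.x)
    (μ : BVar N →₀ ℕ) : shiftExp μ v = μ v := by
  rw [shiftExp, Finsupp.add_apply, erase_ne hx, single_eq_of_ne h0, add_zero]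

lemma shiftExp_of_apply_x_eq_zero {μ : BVar N →₀ ℕ} (h : μ BVar.x = 0) : shiftExp μ = μ := by
  rw [shiftExp, h, single_zero, add_zero, erase_of_notMem_support (by simpa using h)]

lemma shiftX_add (G H : Big N) : shiftX (G + H) = shiftX G + shiftX H :=
  ext_co fun μ => by simp only [co_shiftX, co_add, mul_add]

lemma shiftX_smul (c : ℂ) (G : Big N) : shiftX (c • G) = c • shiftX G :=
  ext_co fun μ => by simp only [co_shiftX, co_smul, mul_left_comm]

noncomputable def shiftXₗ : Big N →ₗ[ℂ] Big N where
  toFun := shiftX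
  map_add' := shiftX_add
  map_smul' := shiftX_smul

lemma coe_shiftXₗ : ⇑(shiftXₗ : Big N →ₗ[ℂ] Big N) = shiftX := rfl

lemma shiftX_C (c : ℂ) : shiftX (C c : Big N) = C c := by
  classical
  refine ext_co fun μ => ?_
  rw [co_shiftX]
  simp only [co, coeff_C]
  by_cases hx : μ BVar.x = 0
  · simp [shiftExp_of_apply_x_eq_zero hx, hx]
  · have hμ : μ ≠ 0 := by rintro rfl; exact hx rfl
    have hshift : shiftExp μ ≠ 0 := fun h => hx <| by
      have := DFunLike.congr_fun h (BVar.t 0 0)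
      rw [shiftExp_apply_t, Finsupp.zero_apply] at this
      omega
    simp [hμ, hshift]

lemma pd_shiftX {v : BVar N} (hv : v ≠ BVar.x) (G : Big N) :
    pd v (shiftX G) = shiftX (pd v G) := by
  refine ext_co fun μ => ?_
  simp only [co_pd, co_shiftX, shiftExp_add_single hv, Finsupp.add_apply,
    single_eq_of_ne hv.symm, add_zero]
  by_cases hv0 : v = BVar.t 0 0
  · subst hv0
    simp only [single_eq_same, shiftExp_apply_t]
    have h := congrArg (Nat.cast : ℕ → ℂ)
      (Nat.add_one_mul_choose_add_one_add (μ (BVar.t 0 0)) (μ BVar.x))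
    push_cast at h ⊢
    linear_combination h * co G (shiftExp μ + single (BVar.t 0 0) 1)
  · rw [single_eq_of_ne (Ne.symm hv0), add_zero, shiftExp_apply_of_ne hv0 hv]
    ring

lemma pd_x_shiftX (G : Big N) : pd BVar.x (shiftX G) = shiftX (pd (BVar.t 0 0) G) := by
  refine ext_co fun μ => ?_
  simp only [co_pd, co_shiftX, shiftExp_add_single_x, Finsupp.add_apply, single_eq_same,
    single_eq_of_ne (show BVar.t (0 : Fin N) 0 ≠ BVar.x by simp), add_zero, shiftExp_apply_t]
  have h := congrArg (Nat.cast : ℕ → ℂ)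
    (Nat.add_one_mul_choose_eq (μ (BVar.t 0 0) + μ BVar.x) (μ BVar.x))
  rw [← add_assoc]
  push_cast at h ⊢
  linear_combination -h * co G (shiftExp μ + single (BVar.t 0 0) 1)

lemma iterate_pd_x_shiftX (n : ℕ) (G : Big N) :
    (pd BVar.x)^[n] (shiftX G) = shiftX ((pd (BVar.t 0 0))^[n] G) :=
  (Function.Semiconj.iterate_right (f := shiftX) (fun G => (pd_x_shiftX G).symm) n G).symm

lemma X_mul_shiftX {w : BVar N} (h0 : w ≠ BVar.t 0 0) (hx : w ≠ BVar.x) (G : Big N) :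
    X w * shiftX G = shiftX (X w * G) := by
  refine ext_co fun μ => ?_
  by_cases hμ : μ w = 0
  · rw [co_X_mul_of_eq_zero hμ, co_shiftX,
      co_X_mul_of_eq_zero ((shiftExp_apply_of_ne h0 hx μ).trans hμ), mul_zero]
  obtain ⟨ν, rfl⟩ := Finsupp.exists_eq_add_single_of_ne_zero hμ
  rw [co_X_mul_add_single, co_shiftX, co_shiftX, shiftExp_add_single hx, co_X_mul_add_single,
    Finsupp.add_apply, Finsupp.add_apply, single_eq_of_ne h0.symm, single_eq_of_ne hx.symm,
    add_zero, add_zero]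

lemma stringSum_shiftX (G : Big N) : stringSum (shiftX G) = shiftX (stringSum G) := by
  have ht0 (p : Fin N × ℕ) : BVar.t p.1 (p.2 + 1) ≠ BVar.t 0 0 := by simp
  refine (stringSum_comm_of_co (L := shiftX) _ shiftExp (fun _ _ => rfl) (fun μ => ?_)
    (fun p G => ?_) G).symm
  · ext p
    rw [mem_stringIdx, mem_stringIdx, shiftExp_apply_of_ne (ht0 p) (by simp)]
  · rw [stringTerm, stringTerm, ← X_mul_shiftX (ht0 p) (by simp), pd_shiftX (by simp)]

lemma evalX0_shiftX (G : Big N) : evalX0 (shiftX G) = evalX0 G := by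
  refine ext_co fun μ => ?_
  rw [co_evalX0, co_evalX0]
  split_ifs with hx
  · rw [co_shiftX, shiftExp_of_apply_x_eq_zero hx, hx, Nat.choose_zero_right, Nat.cast_one,
      one_mul]
  · rfl

/-- The operator `O_str` of the paper. -/
noncomputable def stringOp (G : Big N) : Big N :=
  pd (BVar.t 0 0) G - stringSum G

lemma stringOp_pd (G : Big N) :
    stringOp (pd (BVar.t 0 0) G) = pd (BVar.t 0 0) (stringOp G) := by
  rw [stringOp, stringOp, pd_eq_pderiv, map_sub, ← pd_eq_pderiv, pd_stringSum (by simp)]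

lemma stringOp_shiftX (G : Big N) : stringOp (shiftX G) = shiftX (stringOp G) := by
  rw [stringOp, stringOp, ← coe_shiftXₗ, map_sub, coe_shiftXₗ, pd_shiftX (by simp),
    stringSum_shiftX]

lemma iterate_pd_eq_of_stringOp_eq {G : Big N} {c : ℂ} (hG : stringOp G = C c) (n : ℕ) :
    (pd (BVar.t 0 0))^[n] G = stringSum^[n] G + C (if n = 1 then c else 0) := by
  induction n with
  | zero => simp
  | succ n ih =>
    have hop : stringOp ((pd (BVar.t 0 0))^[n] G) = C (if n = 0 then c else 0) := by
      rw [Function.Commute.iterate_right (f := stringOp) stringOp_pd n G, hG, iterate_pd_C]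
    rw [Function.iterate_succ_apply', ← sub_add_cancel (pd _ _) (stringSum _), ← stringOp, hop,
      ih, stringSum_add, stringSum_C, add_zero, ← Function.iterate_succ_apply' stringSum,
      add_comm]
    simp

end shift

lemma pd_quadEta {η : Matrix (Fin N) (Fin N) ℂ} (hη : η⁻¹.IsSymm) (ν : Fin N) :
    pd (BVar.t ν 0) (quadEta η) = ∑ β, η⁻¹ ν β • X (BVar.t β 0) := by
  classical
  rw [quadEta, pd_eq_pderiv, (pderiv ℂ _).map_smul, map_sum]
  simp only [map_sum, (pderiv ℂ _).map_smul, Derivation.leibniz, pderiv_X, smul_add,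
    Pi.single_apply, BVar.t.injEq, and_true, smul_eq_mul, mul_ite, mul_one, mul_zero,
    smul_ite, smul_zero, Finset.sum_add_distrib, Finset.sum_ite_eq', Finset.mem_univ, if_true]
  rw [Fintype.sum_eq_single ν fun x hx => Finset.sum_eq_zero fun _ _ => if_neg hx]
  simp only [hη.apply ν, if_true, ← add_smul]
  norm_num

noncomputable def raisedGrad (η : Matrix (Fin N) (Fin N) ℂ) (F : Big N) (α : Fin N) : Big N :=
  ∑ μ, η α μ • pd (BVar.t μ 0) F

lemma EvenEps.raisedGrad {F : Big N} (hF : EvenEps F) (η : Matrix (Fin N) (Fin N) ℂ)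
    (α : Fin N) : EvenEps (raisedGrad η F α) := by
  intro μ h
  simp only [Big.raisedGrad, co, map_sum, map_smul, smul_eq_mul] at h
  obtain ⟨ν, -, hν⟩ := Finset.exists_ne_zero_of_sum_ne_zero h
  simpa using hF _ (co_ne_zero_of_co_pd_ne_zero (right_ne_zero_of_mul hν))

lemma wt_eq_shiftX [NeZero N] (η : Matrix (Fin N) (Fin N) ℂ) (F : Big N) (α : Fin N) :
    wt η F α = shiftX (pd (BVar.t 0 0) (raisedGrad η F α)) := by
  simp only [wt, raisedGrad, ← coe_shiftXₗ, pd_eq_pderiv, map_sum, (pderiv ℂ _).map_smul,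
    map_smul]
  simp only [← pd_eq_pderiv, pd_comm (BVar.t 0 0)]

def StringEquation [NeZero N] (η : Matrix (Fin N) (Fin N) ℂ) (c₁ : ℂ) (F : Big N) : Prop :=
  pd (BVar.t 0 0) F = stringSum F + quadEta η + c₁ • epsSq

namespace StringEquation

variable [NeZero N] {η : Matrix (Fin N) (Fin N) ℂ} {c₁ : ℂ} {F : Big N}

lemma pd_pd_t_zero (hF : StringEquation η c₁ F) (hsym : η.IsSymm) (μ : Fin N) :
    pd (BVar.t μ 0) (pd (BVar.t 0 0) F)
      = stringSum (pd (BVar.t μ 0) F) + ∑ β, η⁻¹ μ β • X (BVar.t β 0) := by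
  rw [hF, pd_eq_pderiv, map_add, map_add, (pderiv ℂ _).map_smul, epsSq, pderiv_pow,
    pderiv_X_of_ne (by simp), ← pd_eq_pderiv, pd_quadEta hsym.inv, pd_stringSum (by simp)]
  simp

lemma pd_raisedGrad (hF : StringEquation η c₁ F) (hsym : η.IsSymm) (hnd : IsUnit η.det)
    (α : Fin N) :
    pd (BVar.t 0 0) (raisedGrad η F α) = stringSum (raisedGrad η F α) + X (BVar.t α 0) := by
  classical
  simp only [raisedGrad, pd_eq_pderiv, map_sum, (pderiv ℂ _).map_smul]
  simp only [← pd_eq_pderiv, pd_comm (BVar.t 0 0), hF.pd_pd_t_zero hsym, smul_add,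
    Finset.sum_add_distrib, Matrix.sum_smul_sum_inv_smul hnd, ← coe_stringSumₗ, map_sum,
    map_smul]

lemma stringOp_pd_raisedGrad (hF : StringEquation η c₁ F) (hsym : η.IsSymm)
    (hnd : IsUnit η.det) (α : Fin N) :
    stringOp (pd (BVar.t 0 0) (raisedGrad η F α)) = C (if α = 0 then 1 else 0) := by
  have h := hF.pd_raisedGrad hsym hnd α
  rw [stringOp, h, pd_eq_pderiv, map_add, ← pd_eq_pderiv, pd_stringSum (by simp), h,
    add_sub_cancel_left]
  split_ifs with hα
  · rw [hα, pd_eq_pderiv, pderiv_X_self, map_one]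
  · rw [pd_eq_pderiv, pderiv_X_of_ne (by simpa using hα), map_zero]

lemma iterate_pd_raisedGrad (hF : StringEquation η c₁ F) (hsym : η.IsSymm)
    (hnd : IsUnit η.det) (α : Fin N) (n : ℕ) :
    (pd (BVar.t 0 0))^[n + 1] (raisedGrad η F α) = X (BVar.t α n)
      + C (if n = 1 then (if α = 0 then 1 else 0) else 0)
      + stringSum^[n + 1] (raisedGrad η F α) := by
  rw [Function.iterate_succ_apply, iterate_pd_eq_of_stringOp_eq
    (hF.stringOp_pd_raisedGrad hsym hnd α), hF.pd_raisedGrad hsym hnd α, ← coe_stringSumₗ,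
    iterate_map_add, coe_stringSumₗ, stringSum_iterate_X, zero_add,
    ← Function.iterate_succ_apply]
  abel

lemma stringOp_iterate_pd_x_wt (hF : StringEquation η c₁ F) (hsym : η.IsSymm)
    (hnd : IsUnit η.det) (α : Fin N) (n : ℕ) :
    stringOp ((pd BVar.x)^[n] (wt η F α)) = C (if n = 0 then (if α = 0 then 1 else 0) else 0) := by
  rw [wt_eq_shiftX, iterate_pd_x_shiftX, stringOp_shiftX,
    Function.Commute.iterate_right (f := stringOp) stringOp_pd n,
    hF.stringOp_pd_raisedGrad hsym hnd, iterate_pd_C, shiftX_C]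

lemma evalX0_iterate_pd_x_wt (hF : StringEquation η c₁ F) (hsym : η.IsSymm)
    (hnd : IsUnit η.det) (α : Fin N) (n : ℕ) :
    evalX0 ((pd BVar.x)^[n] (wt η F α)) = X (BVar.t α n)
      + C (if n = 1 then (if α = 0 then 1 else 0) else 0)
      + evalX0 (stringSum^[n + 1] (raisedGrad η F α)) := by
  rw [wt_eq_shiftX, iterate_pd_x_shiftX, evalX0_shiftX, ← Function.iterate_succ_apply,
    hF.iterate_pd_raisedGrad hsym hnd, evalX0_add, evalX0_add,
    evalX0_eq_self (xFree_X (by simp)), evalX0_eq_self (xFree_C _)]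

end StringEquation

end Big

open Big in
theorem statement15_general (N : ℕ) [NeZero N] (η : Matrix (Fin N) (Fin N) ℂ)
    (hsym : η.IsSymm) (hnd : IsUnit η.det)
    (F : Big N) (hev : EvenEps F)
    (c₁ : ℂ)
    (hstring : Big.pd (BVar.t 0 0) F
      = stringSum F + quadEta η + c₁ • epsSq) :
    ∀ (α : Fin N) (n : ℕ),
      (Big.pd (BVar.t 0 0) ((Big.pd BVar.x)^[n] (wt η F α))
          - stringSum ((Big.pd BVar.x)^[n] (wt η F α))
        = if n = 0 ∧ α = 0 then 1 else 0) ∧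
      ∃ R E : Big N,
        (∀ μ, Big.co R μ ≠ 0 → μ BVar.x = 0 ∧ μ BVar.e = 0) ∧
        (∀ μ, tdeg μ ≤ n → Big.co R μ = 0) ∧
        (∀ μ, Big.co E μ ≠ 0 → 2 ≤ μ BVar.e) ∧
        evalX0 ((Big.pd BVar.x)^[n] (wt η F α))
          = MvPowerSeries.X (BVar.t α n)
            + (if n = 1 ∧ α = 0 then 1 else 0) + R + E := by
  intro α n
  refine ⟨by rw [← C_ite_ite]; exact StringEquation.stringOp_iterate_pd_x_wt hstring hsym hnd α n,
    ?_⟩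
  obtain ⟨R, E, hRE, hR, hE⟩ := ((hev.raisedGrad η α).iterate_stringSum (n + 1)).exists_eq_add
  refine ⟨evalX0 R, evalX0 E, fun μ h => ?_, fun μ hμ => ?_, fun μ h => ?_, ?_⟩
  · obtain ⟨hx, hRμ⟩ := co_evalX0_ne_zero h
    exact ⟨hx, (hR μ hRμ).2⟩
  · by_contra h
    have := le_tdeg_of_co_stringSum_iterate_ne_zero (n + 1) (hR μ (co_evalX0_ne_zero h).2).1
    omega
  · exact hE μ (co_evalX0_ne_zero h).2
  · rw [StringEquation.evalX0_iterate_pd_x_wt hstring hsym hnd, hRE, evalX0_add, C_ite_ite,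
      ← add_assoc]

open Big in
/-- properties of the topological series `w^⊤`.  Let `η` be
symmetric nondegenerate and let `F ∈ ℂ[[t^*_*, ε]]` contain only even powers
of `ε` and satisfy the string equation with constant term `ε²c₁`.  Let
`(w^⊤)^α_n := ∂_x^n ((η^{αμ}∂²F/∂t^μ_0∂t^1_0)|_{t^1_0 ↦ t^1_0 + x})`.  Then:
(i) `O_str (w^⊤)^α_n = δ_{n,0}δ^{α,1}` where
`O_str = ∂/∂t^1_0 − Σ_{γ,m} t^γ_{m+1}∂/∂t^γ_m`;
(ii) `(w^⊤)^α_n|_{x=0} = t^α_n + δ_{n,1}δ^{α,1} + R^α_n(t^*_*) + O(ε²)` where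
the coefficient of every monomial `t^{α_1}_{d_1}⋯t^{α_m}_{d_m}` in
`R^α_n ∈ ℂ[[t^*_*]]` vanishes unless `d_1 + ⋯ + d_m ≥ n + 1`. -/
theorem statement15 (N : ℕ) [NeZero N] (η : Matrix (Fin N) (Fin N) ℂ)
    (hsym : η.IsSymm) (hnd : IsUnit η.det)
    (F : Big N) (hxF : XFree F) (hev : EvenEps F)
    (c₁ : ℂ)
    (hstring : Big.pd (BVar.t 0 0) F
      = stringSum F + quadEta η + c₁ • epsSq) :
    ∀ (α : Fin N) (n : ℕ),
      (Big.pd (BVar.t 0 0) ((Big.pd BVar.x)^[n] (wt η F α))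
          - stringSum ((Big.pd BVar.x)^[n] (wt η F α))
        = if n = 0 ∧ α = 0 then 1 else 0) ∧
      ∃ R E : Big N,
        (∀ μ, Big.co R μ ≠ 0 → μ BVar.x = 0 ∧ μ BVar.e = 0) ∧
        (∀ μ, tdeg μ ≤ n → Big.co R μ = 0) ∧
        (∀ μ, Big.co E μ ≠ 0 → 2 ≤ μ BVar.e) ∧
        evalX0 ((Big.pd BVar.x)^[n] (wt η F α))
          = MvPowerSeries.X (BVar.t α n)
            + (if n = 1 ∧ α = 0 then 1 else 0) + R + E :=
  statement15_general N η hsym hnd F hev c₁ hstring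
end
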